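/- arXiv:1701.09071 — 3 statements merged into one kernel-verified Lean document; each statement's English description precedes it below -/
import Mathlib

section
/- Let $p \in (1, 2)$, $K \geq 0$, and set $\vartheta(\varepsilon, p) = \sqrt{\tfrac{1}{2}\left(\tfrac{p-1}{2\varepsilon}\right)^{2/(2-p)} + \tfrac{1}{2}} - 1$ for $\varepsilon > 0$. Then there exists $\varepsilon \in (0, \tfrac{p-1}{2})$ such that for all $a, b \in \mathbb{R}^d$: $|a+b|^p - |a|^p - p|a|^{p-2}\langle a, b\rangle \mathbf{1}_{a \neq 0} \geq 2Kp|a|^{p-1}|b|\mathbf{1}_{|b| \geq \vartheta(\varepsilon,p)|a|} + p\varepsilon |a|^{p-2}|b|^2 \mathbf{1}_{|b| < \vartheta(\varepsilon,p)|a|}$. -/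
/-!
Write `v = a + t • b`. For `t ∈ [0, 1]` with `v ≠ 0`, the second derivative of `t ↦ ‖v‖ ^ p` is
`p ‖v‖ ^ (p - 2) (‖b‖² - (2 - p) ⟪v, b⟫² / ‖v‖²) ≥ p (p - 1) (‖a‖ + ‖b‖) ^ (p - 2) ‖b‖²`
by Cauchy–Schwarz. The first derivative is continuous also at the (at most one) `t` with `v = 0`,
so it grows at least at this rate on all of `[0, 1]`, and the mean value theorem gives
`Ψ ≥ p (p - 1) / 2 · (‖a‖ + ‖b‖) ^ (p - 2) ‖b‖²`.

Both branches follow from this bound once `ε` is chosen with `ϑ(ε, p) = M`, where `M ≥ 1` and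
`(p - 1) M ^ (p - 1) ≥ 16 K`. If `‖b‖ < M ‖a‖`, then
`(‖a‖ + ‖b‖) ^ (p - 2) ≥ ((M + 1) ‖a‖) ^ (p - 2)`. If `‖b‖ ≥ M ‖a‖`, then `‖a‖ + ‖b‖ ≤ 2 ‖b‖` and
`‖a‖ ^ (p - 1) ‖b‖ ≤ (‖a‖ + ‖b‖) ^ p / M ^ (p - 1)`.
-/

open Real Set
open scoped RealInnerProductSpace

theorem monotoneOn_Icc_of_hasDerivAt_nonneg_of_ne {f f' : ℝ → ℝ} {u v c : ℝ}
    (hf : ContinuousOn f (Icc u v)) (hf' : ∀ t ∈ Ioo u v, t ≠ c → HasDerivAt f (f' t) t)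
    (hf'₀ : ∀ t ∈ Ioo u v, t ≠ c → 0 ≤ f' t) : MonotoneOn f (Icc u v) := by
  have key : ∀ u' v', u ≤ u' → v' ≤ v → c ∉ Ioo u' v' → MonotoneOn f (Icc u' v') := by
    intro u' v' hu hv hc
    have hsub : Ioo u' v' ⊆ Ioo u v := Ioo_subset_Ioo hu hv
    have hne : ∀ t ∈ Ioo u' v', t ≠ c := fun t ht htc => hc (htc ▸ ht)
    refine monotoneOn_of_hasDerivWithinAt_nonneg (f' := f') (convex_Icc u' v')
      (hf.mono (Icc_subset_Icc hu hv)) (fun t ht => ?_) (fun t ht => ?_)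
    · rw [interior_Icc] at ht ⊢
      exact (hf' t (hsub ht) (hne t ht)).hasDerivWithinAt
    · rw [interior_Icc] at ht
      exact hf'₀ t (hsub ht) (hne t ht)
  by_cases hc : c ∈ Ioo u v
  · rw [← Icc_union_Icc_eq_Icc hc.1.le hc.2.le]
    exact (key u c le_rfl hc.2.le (by simp)).union_right (key c v hc.1.le le_rfl (by simp))
      (isGreatest_Icc hc.1.le) (isLeast_Icc hc.2.le)
  · exact key u v le_rfl le_rfl hc

theorem mul_rpow_mul_le_rpow_mul_sq_of_mul_le {p K M s t : ℝ} (hp : 1 < p) (hK : 0 ≤ K)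
    (hM : 1 ≤ M) (hMK : 16 * K ≤ (p - 1) * M ^ (p - 1)) (hs : 0 ≤ s) (hst : M * s ≤ t) :
    2 * K * p * s ^ (p - 1) * t ≤ p * (p - 1) / 2 * (s + t) ^ (p - 2) * t ^ 2 := by
  have ht : 0 ≤ t := le_trans (by positivity) hst
  rcases eq_or_lt_of_le hs with rfl | hs
  · rw [zero_rpow (by linarith)]
    have : 0 ≤ p * (p - 1) / 2 := by nlinarith
    simp only [mul_zero, zero_mul]
    positivity
  set u := s + t
  have hu0 : 0 < u := by positivity
  have hut : u ≤ 2 * t := by nlinarith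
  have hN : 0 < M ^ (p - 1) := by positivity
  have hsu : M ^ (p - 1) * s ^ (p - 1) ≤ u ^ (p - 1) := by
    rw [← mul_rpow (by positivity) hs.le]
    exact rpow_le_rpow (by positivity) (by linarith) (by linarith)
  have hu2 : u ^ (p - 2) * u ^ 2 = u ^ p := by
    rw [← rpow_natCast, ← rpow_add hu0]
    norm_num
  have hu1 : u ^ (p - 1) * u = u ^ p := by
    rw [← rpow_add_one hu0.ne']
    norm_num
  refine le_of_mul_le_mul_left ?_ hN
  calc M ^ (p - 1) * (2 * K * p * s ^ (p - 1) * t)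
      = 2 * K * p * (M ^ (p - 1) * s ^ (p - 1)) * t := by ring
    _ ≤ 2 * K * p * u ^ (p - 1) * u := by gcongr; linarith
    _ = p / 8 * (16 * K) * u ^ p := by rw [mul_assoc _ (u ^ (p - 1)), hu1]; ring
    _ ≤ p / 8 * ((p - 1) * M ^ (p - 1)) * (u ^ (p - 2) * u ^ 2) := by rw [hu2]; gcongr
    _ ≤ M ^ (p - 1) * (p * (p - 1) / 2 * u ^ (p - 2) * t ^ 2) := by
        have hu4 : u ^ 2 ≤ 4 * t ^ 2 := by nlinarith
        have hpp : 0 ≤ p * (p - 1) * M ^ (p - 1) * u ^ (p - 2) := by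
          have : 0 ≤ p * (p - 1) := by nlinarith
          positivity
        nlinarith [mul_le_mul_of_nonneg_left hu4 hpp]

section NormRpow

variable {E : Type*} [NormedAddCommGroup E] [InnerProductSpace ℝ E]

theorem hasDerivAt_add_smul (a b : E) (t : ℝ) : HasDerivAt (fun t : ℝ => a + t • b) b t := by
  simpa using ((hasDerivAt_id t).smul_const b).const_add a

theorem hasDerivAt_norm_add_smul_rpow {p : ℝ} (hp : 1 < p) (a b : E) (t : ℝ) :
    HasDerivAt (fun t : ℝ => ‖a + t • b‖ ^ p) (p * ‖a + t • b‖ ^ (p - 2) * ⟪a + t • b, b⟫) t := by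
  have h := (hasFDerivAt_norm_rpow (a + t • b) hp).comp_hasDerivAt t (hasDerivAt_add_smul a b t)
  exact h.congr_deriv (by simp only [smul_apply, innerSL_apply_apply, smul_eq_mul])

theorem continuous_norm_add_smul_rpow_mul_inner {p : ℝ} (hp : 1 < p) (a b : E) :
    Continuous fun t : ℝ => p * ‖a + t • b‖ ^ (p - 2) * ⟪a + t • b, b⟫ := by
  have hgrad := (contDiff_norm_rpow (E := E) hp).continuous_fderiv one_ne_zero
  refine ((hgrad.comp (f := fun t : ℝ => a + t • b) (by fun_prop)).clm_apply
    (continuous_const (y := b))).congr fun t => ?_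
  simp only [Function.comp_apply, fderiv_norm_rpow _ hp, smul_apply,
    innerSL_apply_apply, smul_eq_mul]

theorem hasDerivAt_norm_add_smul_rpow_mul_inner {p : ℝ} (a b : E) {t : ℝ} (ht : a + t • b ≠ 0) :
    HasDerivAt (fun t : ℝ => p * ‖a + t • b‖ ^ (p - 2) * ⟪a + t • b, b⟫)
      (p * ‖a + t • b‖ ^ (p - 2) *
        (‖b‖ ^ 2 + (p - 2) * (⟪a + t • b, b⟫ ^ 2 / ‖a + t • b‖ ^ 2))) t := by
  have hline := hasDerivAt_add_smul a b t
  have hpow : ∀ x : E, ‖x‖ ^ (p - 2) = (‖x‖ ^ 2) ^ ((p - 2) / 2) := fun x => by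
    rw [← rpow_natCast_mul (norm_nonneg x)]
    norm_num [mul_div_cancel₀]
  have h : HasDerivAt (fun s : ℝ => p * ((‖a + s • b‖ ^ 2) ^ ((p - 2) / 2) * ⟪a + s • b, b⟫)) _ t :=
    ((hline.norm_sq.rpow_const (Or.inl (by positivity))).mul
      (hline.inner ℝ (hasDerivAt_const t b))).const_mul p
  simp only [hpow, mul_assoc]
  refine h.congr_deriv ?_
  rw [rpow_sub_one (by positivity), inner_zero_right, real_inner_self_eq_norm_sq]
  field_simp
  ring

theorem inner_sq_div_norm_sq_le (v b : E) : ⟪v, b⟫ ^ 2 / ‖v‖ ^ 2 ≤ ‖b‖ ^ 2 := by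
  rcases eq_or_ne v 0 with rfl | hv
  · simp
  rw [div_le_iff₀ (by positivity)]
  nlinarith [abs_real_inner_le_norm v b, sq_abs ⟪v, b⟫, abs_nonneg ⟪v, b⟫, norm_nonneg v,
    norm_nonneg b]

theorem norm_add_smul_le_of_mem_Icc (a b : E) {t : ℝ} (ht : t ∈ Icc (0 : ℝ) 1) :
    ‖a + t • b‖ ≤ ‖a‖ + ‖b‖ := by
  calc ‖a + t • b‖ ≤ ‖a‖ + ‖t • b‖ := norm_add_le _ _
    _ ≤ ‖a‖ + ‖b‖ := by
      rw [norm_smul, Real.norm_of_nonneg ht.1]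
      gcongr
      exact mul_le_of_le_one_left (norm_nonneg b) ht.2

theorem exists_forall_ne_add_smul_ne_zero {b : E} (hb : b ≠ 0) (a : E) :
    ∃ c : ℝ, ∀ t, t ≠ c → a + t • b ≠ 0 := by
  by_cases h : ∃ c : ℝ, a + c • b = 0
  · obtain ⟨c, hc⟩ := h
    refine ⟨c, fun t htc ht => htc ?_⟩
    have h0 := sub_eq_zero.mpr (ht.trans hc.symm)
    rw [add_sub_add_left_eq_sub, ← sub_smul, smul_eq_zero] at h0
    exact sub_eq_zero.mp (h0.resolve_right hb)
  · exact ⟨0, fun t _ ht => h ⟨t, ht⟩⟩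

/-- `Ψ(a, b, p)` of the paper: the indicator `𝟙_{a ≠ 0}` is dropped since `⟪0, b⟫ = 0`. -/
noncomputable def normRpowRemainder (p : ℝ) (a b : E) : ℝ :=
  ‖a + b‖ ^ p - ‖a‖ ^ p - p * ‖a‖ ^ (p - 2) * ⟪a, b⟫

theorem mul_rpow_mul_sq_le_normRpowRemainder {p : ℝ} (hp : 1 < p) (hp2 : p ≤ 2) (a b : E) :
    p * (p - 1) / 2 * (‖a‖ + ‖b‖) ^ (p - 2) * ‖b‖ ^ 2 ≤ normRpowRemainder p a b := by
  rcases eq_or_ne b 0 with rfl | hb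
  · simp [normRpowRemainder]
  set m := p * (p - 1) * (‖a‖ + ‖b‖) ^ (p - 2) * ‖b‖ ^ 2
  set G := fun t : ℝ => p * ‖a + t • b‖ ^ (p - 2) * ⟪a + t • b, b⟫ with hG
  obtain ⟨c, hc⟩ := exists_forall_ne_add_smul_ne_zero hb a
  have hGm : ∀ t ∈ Ioo (0 : ℝ) 1, t ≠ c →
      m ≤ p * ‖a + t • b‖ ^ (p - 2) *
        (‖b‖ ^ 2 + (p - 2) * (⟪a + t • b, b⟫ ^ 2 / ‖a + t • b‖ ^ 2)) := by
    intro t ht htc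
    have hv : 0 < ‖a + t • b‖ := norm_pos_iff.mpr (hc t htc)
    have hnorm : (‖a‖ + ‖b‖) ^ (p - 2) ≤ ‖a + t • b‖ ^ (p - 2) :=
      rpow_le_rpow_of_nonpos hv (norm_add_smul_le_of_mem_Icc a b (Ioo_subset_Icc_self ht))
        (by linarith)
    have hcs : (p - 1) * ‖b‖ ^ 2 ≤ ‖b‖ ^ 2 + (p - 2) * (⟪a + t • b, b⟫ ^ 2 / ‖a + t • b‖ ^ 2) := by
      have := mul_le_mul_of_nonpos_left (inner_sq_div_norm_sq_le (a + t • b) b)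
        (by linarith : p - 2 ≤ 0)
      linarith
    calc m = p * (p - 1) * (‖a‖ + ‖b‖) ^ (p - 2) * ‖b‖ ^ 2 := rfl
      _ ≤ p * (p - 1) * ‖a + t • b‖ ^ (p - 2) * ‖b‖ ^ 2 := by
        gcongr
      _ = p * ‖a + t • b‖ ^ (p - 2) * ((p - 1) * ‖b‖ ^ 2) := by ring
      _ ≤ _ := by gcongr
  have hmono : MonotoneOn (fun t => G t - m * t) (Icc 0 1) :=
    monotoneOn_Icc_of_hasDerivAt_nonneg_of_ne (c := c)
      ((continuous_norm_add_smul_rpow_mul_inner hp a b).sub (continuous_const_mul m)).continuousOn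
      (fun t _ htc => (hasDerivAt_norm_add_smul_rpow_mul_inner a b (hc t htc)).sub
        ((hasDerivAt_id t).const_mul m))
      (fun t ht htc => by simpa using hGm t ht htc)
  have hderiv : ∀ t, HasDerivAt (fun t => ‖a + t • b‖ ^ p - m / 2 * t ^ 2) (G t - m * t) t :=
    fun t => (hasDerivAt_norm_add_smul_rpow hp a b t).sub
      (((hasDerivAt_pow 2 t).const_mul (m / 2)).congr_deriv (by ring))
  obtain ⟨s, hs, hslope⟩ := exists_hasDerivAt_eq_slope _ _ zero_lt_one
    (fun t _ => (hderiv t).continuousAt.continuousWithinAt) (fun t _ => hderiv t)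
  have h0s : G 0 - m * 0 ≤ G s - m * s :=
    hmono (left_mem_Icc.mpr zero_le_one) (Ioo_subset_Icc_self hs) hs.1.le
  rw [hslope] at h0s
  simp only [hG, zero_smul, one_smul, add_zero, mul_zero, sub_zero, one_pow, div_one] at h0s
  rw [normRpowRemainder]
  linarith

theorem mul_rpow_mul_le_normRpowRemainder_of_mul_le {p K M : ℝ} (hp : 1 < p) (hp2 : p ≤ 2)
    (hK : 0 ≤ K) (hM : 1 ≤ M) (hMK : 16 * K ≤ (p - 1) * M ^ (p - 1)) {a b : E}
    (hab : M * ‖a‖ ≤ ‖b‖) :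
    2 * K * p * ‖a‖ ^ (p - 1) * ‖b‖ ≤ normRpowRemainder p a b :=
  (mul_rpow_mul_le_rpow_mul_sq_of_mul_le hp hK hM hMK (norm_nonneg a) hab).trans
    (mul_rpow_mul_sq_le_normRpowRemainder hp hp2 a b)

theorem mul_rpow_mul_sq_le_normRpowRemainder_of_lt_mul {p ε M : ℝ} (hp : 1 < p) (hp2 : p ≤ 2)
    (hε : ε ≤ (p - 1) / 2 * (M + 1) ^ (p - 2)) {a b : E} (hab : ‖b‖ < M * ‖a‖) :
    p * ε * ‖a‖ ^ (p - 2) * ‖b‖ ^ 2 ≤ normRpowRemainder p a b := by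
  have ha : 0 < ‖a‖ := (norm_nonneg a).lt_of_ne fun h => by
    rw [← h, mul_zero] at hab
    exact (norm_nonneg b).not_gt hab
  have hM : 0 < M + 1 := by nlinarith [norm_nonneg b]
  have hp1 : 0 ≤ p * (p - 1) / 2 := by nlinarith
  calc p * ε * ‖a‖ ^ (p - 2) * ‖b‖ ^ 2
      ≤ p * ((p - 1) / 2 * (M + 1) ^ (p - 2)) * ‖a‖ ^ (p - 2) * ‖b‖ ^ 2 := by
        gcongr
    _ = p * (p - 1) / 2 * ((M + 1) * ‖a‖) ^ (p - 2) * ‖b‖ ^ 2 := by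
        rw [mul_rpow hM.le ha.le]
        ring
    _ ≤ p * (p - 1) / 2 * (‖a‖ + ‖b‖) ^ (p - 2) * ‖b‖ ^ 2 := by
        have hsum : ‖a‖ + ‖b‖ ≤ (M + 1) * ‖a‖ := by linarith
        have := rpow_le_rpow_of_nonpos (by positivity) hsum (by linarith : p - 2 ≤ 0)
        exact mul_le_mul_of_nonneg_right (mul_le_mul_of_nonneg_left this hp1) (sq_nonneg _)
    _ ≤ normRpowRemainder p a b := mul_rpow_mul_sq_le_normRpowRemainder hp hp2 a b

end NormRpow

noncomputable def vartheta (ε p : ℝ) : ℝ :=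
  Real.sqrt ((1/2) * (((p-1)/(2*ε)) ^ (2/(2-p))) + 1/2) - 1

theorem exists_vartheta_eq {p M : ℝ} (hp : 1 < p) (hp2 : p < 2) (hM : 0 < M) :
    ∃ ε, 0 < ε ∧ ε < (p - 1) / 2 ∧ vartheta ε p = M ∧
      ε ≤ (p - 1) / 2 * (M + 1) ^ (p - 2) := by
  have hM1 : 0 ≤ M + 1 := by linarith
  set C := (2 * (M + 1) ^ 2 - 1) ^ ((2 - p) / 2) with hC
  have hMC : (M + 1) ^ (2 - p) ≤ C := by
    have h2p : (M + 1) ^ (2 - p) = ((M + 1) ^ 2) ^ ((2 - p) / 2) := by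
      rw [← rpow_natCast_mul hM1]
      norm_num [mul_div_cancel₀]
    rw [h2p]
    exact rpow_le_rpow (sq_nonneg _) (by nlinarith) (by linarith)
  have hC1 : 1 < C := (one_lt_rpow (x := M + 1) (by linarith) (by linarith)).trans_le hMC
  have hC0 : 0 < C := by linarith
  refine ⟨(p - 1) / (2 * C), by positivity, ?_, ?_, ?_⟩
  · exact div_lt_div_of_pos_left (by linarith) two_pos (by linarith)
  · have hCε : (p - 1) / (2 * ((p - 1) / (2 * C))) = C := by
      have : p - 1 ≠ 0 := by linarith
      field_simp
    rw [vartheta, hCε, hC, ← rpow_mul (by nlinarith), div_mul_div_comm,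
      mul_comm (2 - p), div_self (by positivity), rpow_one,
      show 1 / 2 * (2 * (M + 1) ^ 2 - 1) + 1 / 2 = (M + 1) ^ 2 by ring, sqrt_sq hM1]
    ring
  · rw [show p - 2 = -(2 - p) by ring, rpow_neg hM1, div_mul_eq_div_mul_one_div (p - 1) 2 C,
      one_div]
    gcongr

open scoped Classical in
theorem stmt5 (d : ℕ) (p K : ℝ) (hp : 1 < p) (hp2 : p < 2) (hK : 0 ≤ K) :
    ∃ ε : ℝ, 0 < ε ∧ ε < (p - 1) / 2 ∧
      ∀ a b : EuclideanSpace ℝ (Fin d),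
        (if ‖b‖ ≥ (Real.sqrt ((1/2) * (((p-1)/(2*ε)) ^ (2/(2-p))) + 1/2) - 1) * ‖a‖ then
            2 * K * p * ‖a‖ ^ (p - 1) * ‖b‖
          else p * ε * ‖a‖ ^ (p - 2) * ‖b‖ ^ 2) ≤
        ‖a + b‖ ^ p - ‖a‖ ^ p -
          (if a ≠ 0 then p * ‖a‖ ^ (p - 2) * (inner ℝ a b : ℝ) else 0) := by
  have hp1 : 0 < p - 1 := by linarith
  obtain ⟨M, hMK, hM⟩ := (((tendsto_rpow_atTop hp1).eventually_ge_atTop (16 * K / (p - 1))).and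
    (Filter.eventually_ge_atTop 1)).exists
  obtain ⟨ε, hε, hεp, hθ, hεM⟩ := exists_vartheta_eq hp hp2 (by linarith : 0 < M)
  refine ⟨ε, hε, hεp, fun a b => ?_⟩
  have hΨ : ‖a + b‖ ^ p - ‖a‖ ^ p - (if a ≠ 0 then p * ‖a‖ ^ (p - 2) * ⟪a, b⟫ else 0) =
      normRpowRemainder p a b := by
    by_cases ha : a = 0 <;> simp [ha, normRpowRemainder]
  rw [vartheta] at hθ
  rw [hθ, hΨ]
  split_ifs with hab
  · exact mul_rpow_mul_le_normRpowRemainder_of_mul_le hp hp2.le hK hM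
      ((div_le_iff₀' hp1).mp hMK) hab
  · exact mul_rpow_mul_sq_le_normRpowRemainder_of_lt_mul hp hp2.le hεM (not_le.mp hab)
end

section
/- Let $p \in (1, 2)$, $K \geq 0$, and $t \in \mathbb{R}$, $\tau^2 \geq 0$ with $t^2 + \tau^2 \geq \alpha(K,p)^2$ where $\alpha(K,p) = (4(2K+2)+1)^{1/(p-1)}$. Then $\left((1+t)^2 + \tau^2\right)^{p/2} - 1 - pt \geq 2Kp\left(t^2 + \tau^2\right)^{1/2}$. -/
/-!
Write `s = t² + τ²`. Once `s ≥ 16` we have `s ≤ 2((1 + t)² + τ²)`, so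
`((1 + t)² + τ²)^{p/2} ≥ s^{p/2} / 2` because `2^{p/2} ≤ 2`. The threshold is chosen so that
`s^{(p-1)/2} ≥ 8K + 9`, i.e. `s^{p/2} ≥ (8K + 9) √s`, while `-pt ≥ -2√s` and `2Kp√s ≤ 4K√s`;
the surplus `(5/2) √s ≥ 1` absorbs the constant term.
-/

open Real

lemma sq_add_le_two_mul_one_add_sq_add {t tsq : ℝ} (htsq : 0 ≤ tsq) (h : 16 ≤ t ^ 2 + tsq) :
    t ^ 2 + tsq ≤ 2 * ((1 + t) ^ 2 + tsq) := by
  rcases le_or_gt (-4) t with ht | ht <;> nlinarith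

lemma rpow_half_le_two_mul_rpow_half {a b p : ℝ} (ha : 0 ≤ a) (hab : a ≤ 2 * b)
    (hp : 0 ≤ p) (hp2 : p ≤ 2) :
    a ^ (p / 2) ≤ 2 * b ^ (p / 2) := by
  have hb : 0 ≤ b := by linarith
  have htwo : (2 : ℝ) ^ (p / 2) ≤ 2 := by
    simpa using rpow_le_rpow_of_exponent_le (x := 2) (by norm_num) (by linarith : p / 2 ≤ 1)
  calc a ^ (p / 2) ≤ (2 * b) ^ (p / 2) := rpow_le_rpow ha hab (by positivity)
    _ = 2 ^ (p / 2) * b ^ (p / 2) := mul_rpow (by norm_num) hb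
    _ ≤ 2 * b ^ (p / 2) := by gcongr

lemma mul_sqrt_le_rpow_half {c s p : ℝ} (hc : 0 ≤ c) (hp : 1 < p)
    (h : (c ^ (1 / (p - 1))) ^ 2 ≤ s) :
    c * √s ≤ s ^ (p / 2) := by
  have hq : p - 1 ≠ 0 := by linarith
  have hs : 0 ≤ s := le_trans (sq_nonneg _) h
  have hgrowth : c ≤ s ^ ((p - 1) / 2) :=
    calc c = ((c ^ (1 / (p - 1))) ^ (2 : ℝ)) ^ ((p - 1) / 2) := by
          rw [← rpow_mul (by positivity), mul_div_cancel₀ _ two_ne_zero, one_div,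
            rpow_inv_rpow hc hq]
      _ ≤ s ^ ((p - 1) / 2) := by
          rw [rpow_two]
          exact rpow_le_rpow (by positivity) h (by linarith)
  calc c * √s ≤ s ^ ((p - 1) / 2) * s ^ (1 / 2 : ℝ) := by
        rw [sqrt_eq_rpow]
        gcongr
    _ = s ^ (p / 2) := by
        rw [← rpow_add' hs (by ring_nf; positivity)]
        ring_nf

theorem stmt9 (p K t tsq : ℝ) (hp : 1 < p) (hp2 : p < 2) (hK : 0 ≤ K) (htsq : 0 ≤ tsq)
    (hbig : ((4 * (2 * K + 2) + 1) ^ (1 / (p - 1))) ^ 2 ≤ t ^ 2 + tsq) :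
    2 * K * p * (t ^ 2 + tsq) ^ (1 / 2 : ℝ) ≤
      ((1 + t) ^ 2 + tsq) ^ (p / 2) - 1 - p * t := by
  rw [← sqrt_eq_rpow]
  set s := t ^ 2 + tsq
  have hthreshold : 4 * (2 * K + 2) + 1 ≤ (4 * (2 * K + 2) + 1) ^ (1 / (p - 1)) :=
    self_le_rpow_of_one_le (by linarith) (by rw [le_div_iff₀ (by linarith)]; linarith)
  have hs : 16 ≤ s := by nlinarith
  have hsqrt : 1 ≤ √s := one_le_sqrt.mpr (by linarith)
  have hgrowth := mul_sqrt_le_rpow_half (by positivity) hp hbig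
  have hcompare : s ^ (p / 2) ≤ 2 * ((1 + t) ^ 2 + tsq) ^ (p / 2) :=
    rpow_half_le_two_mul_rpow_half (by positivity) (sq_add_le_two_mul_one_add_sq_add htsq hs)
      (by linarith) hp2.le
  have hpt : p * t ≤ 2 * √s :=
    calc p * t ≤ p * √s := by gcongr; exact (le_abs_self t).trans (abs_le_sqrt (by simp only [s]; linarith))
      _ ≤ 2 * √s := by gcongr
  have hKp : 2 * K * p * √s ≤ 4 * K * √s := by
    have : 0 ≤ K * √s := by positivity
    nlinarith
  linarith
end

section
/- Let $p \in (1,2)$, $\varepsilon \in (0, \tfrac{p-1}{2})$, and $\tau^2 \geq 0$. Define the function $\varpi$ on $(-1, 0]$ by $\varpi(x) = (2-p)\varepsilon x^2 + (2\varepsilon + 1 - p)x + (2-p)\varepsilon\tau^2 + \tau^2\tfrac{1 - 2\varepsilon}{1+x}$. Then $\varpi$ is decreasing on $(-1, 0]$ and $\varpi(x) \geq \varpi(0) = \tau^2(1 - p\varepsilon) \geq 0$ for all $x \in (-1, 0]$. -/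
open Real Set

section

variable {K : Type*} [Field K] [LinearOrder K] [IsStrictOrderedRing K]

lemma antitoneOn_const_mul_sq {a : K} (ha : 0 ≤ a) : AntitoneOn (fun x => a * x ^ 2) (Iic 0) :=
  fun _ _ _ hy hxy => mul_le_mul_of_nonneg_left (by nlinarith [mem_Iic.1 hy]) ha

lemma antitoneOn_const_div_one_add {d : K} (hd : 0 ≤ d) :
    AntitoneOn (fun x => d / (1 + x)) (Ioi (-1)) :=
  fun x hx _ _ hxy => div_le_div_of_nonneg_left hd (by linarith [mem_Ioi.1 hx]) (by linarith)

lemma strictAntiOn_quadratic_add_div_one_add {a b c d : K} (ha : 0 ≤ a) (hb : b < 0)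
    (hd : 0 ≤ d) :
    StrictAntiOn (fun x => a * x ^ 2 + b * x + c + d / (1 + x)) (Ioc (-1) 0) :=
  (((antitoneOn_const_mul_sq ha).mono Ioc_subset_Iic_self).add_strictAnti
    ((strictAnti_mul_left hb).strictAntiOn _) |>.add_const c).add_antitone
    ((antitoneOn_const_div_one_add hd).mono Ioc_subset_Ioi_self)

end

theorem stmt12_general (p ε tsq : ℝ) (hp2 : p < 2) (hε : 0 < ε)
    (hε2 : ε < (p - 1) / 2) (htsq : 0 ≤ tsq)
    (ϖ : ℝ → ℝ)
    (hϖ : ϖ = fun x => (2 - p) * ε * x ^ 2 + (2 * ε + 1 - p) * x + (2 - p) * ε * tsq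
      + tsq * ((1 - 2 * ε) / (1 + x))) :
    StrictAntiOn ϖ (Ioc (-1 : ℝ) 0) ∧
    (∀ x ∈ Ioc (-1 : ℝ) 0, ϖ 0 ≤ ϖ x) ∧
    ϖ 0 = tsq * (1 - p * ε) ∧ 0 ≤ ϖ 0 := by
  have hϖ' : ϖ = fun x => (2 - p) * ε * x ^ 2 + (2 * ε + 1 - p) * x + (2 - p) * ε * tsq
      + tsq * (1 - 2 * ε) / (1 + x) := by
    simp only [hϖ, mul_div_assoc]
  have hanti : StrictAntiOn ϖ (Ioc (-1) 0) := hϖ' ▸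
    strictAntiOn_quadratic_add_div_one_add (mul_nonneg (by linarith) hε.le) (by linarith)
      (mul_nonneg htsq (by linarith))
  have hϖ0 : ϖ 0 = tsq * (1 - p * ε) := by
    rw [hϖ]
    ring
  -- `p * ε < p * (p - 1) / 2 < 1` for `p < 2`
  have hpε : p * ε ≤ 1 := by nlinarith
  exact ⟨hanti, fun x hx => hanti.antitoneOn hx ⟨by norm_num, le_rfl⟩ hx.2, hϖ0,
    hϖ0 ▸ mul_nonneg htsq (by linarith)⟩

theorem stmt12 (p ε tsq : ℝ) (hp : 1 < p) (hp2 : p < 2) (hε : 0 < ε)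
    (hε2 : ε < (p - 1) / 2) (htsq : 0 ≤ tsq)
    (ϖ : ℝ → ℝ)
    (hϖ : ϖ = fun x => (2 - p) * ε * x ^ 2 + (2 * ε + 1 - p) * x + (2 - p) * ε * tsq
      + tsq * ((1 - 2 * ε) / (1 + x))) :
    StrictAntiOn ϖ (Ioc (-1 : ℝ) 0) ∧
    (∀ x ∈ Ioc (-1 : ℝ) 0, ϖ 0 ≤ ϖ x) ∧
    ϖ 0 = tsq * (1 - p * ε) ∧ 0 ≤ ϖ 0 :=
  stmt12_general p ε tsq hp2 hε hε2 htsq ϖ hϖ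
end
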